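/- arXiv:2411.13509 — 5 statements merged into one kernel-verified Lean document; each statement's English description precedes it below -/
import Mathlib

section
/- Let H ∈ F2^{m×2n}, C = Row(H), r ⊆ {1,…,n} an erasure set and s ∈ F2^m a syndrome. If E and F are both feasible solutions for (r,s), then the two finite sets {v ∈ E + C : v is a feasible solution for (r,s)} and {v ∈ F + C : v is a feasible solution for (r,s)} have equal cardinality. (In particular, any two logical cosets both containing feasible solutions contain equally many feasible solutions.) -/
open Matrix

/-- The binary field `F₂`. -/
abbrev F2 := ZMod 2

/-- Length-`2n` binary (row) vectors, with coordinate `j` written `Sum.inl j`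
and coordinate `j + n` written `Sum.inr j`. -/
abbrev QV (n : ℕ) := (Fin n ⊕ Fin n) → F2

/-- The symplectic form matrix `Λ = [[0, Iₙ], [Iₙ, 0]]`. -/
def Lam (n : ℕ) : Matrix (Fin n ⊕ Fin n) (Fin n ⊕ Fin n) F2 :=
  Matrix.fromBlocks 0 1 1 0

/-- Symplectic inner product `⟨u, v⟩ = u Λ vᵀ`. -/
def sympl {n : ℕ} (u v : QV n) : F2 := u ⬝ᵥ (Lam n *ᵥ v)

/-- The syndrome `⟨v, H⟩` of a vector `v` with respect to a check matrix `H`. -/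
def synd {n m : ℕ} (H : Matrix (Fin m) (Fin n ⊕ Fin n) F2) (v : QV n) : Fin m → F2 :=
  fun i => sympl v (H i)

/-- The row space `C = Row(H)` of a check matrix. -/
def rowSpace {n m : ℕ} (H : Matrix (Fin m) (Fin n ⊕ Fin n) F2) : Submodule F2 (QV n) :=
  Submodule.span F2 (Set.range H)

/-- `v` is supported on `r2 = r ∪ (r + n)`: it vanishes outside the erased coordinates. -/
def SupportedOn {n : ℕ} (r : Finset (Fin n)) (v : QV n) : Prop :=
  ∀ j : Fin n, j ∉ r → v (Sum.inl j) = 0 ∧ v (Sum.inr j) = 0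

/-- `v` is a feasible solution for the erasure set `r` and syndrome `s`. -/
def Feasible {n m : ℕ} (H : Matrix (Fin m) (Fin n ⊕ Fin n) F2)
    (r : Finset (Fin n)) (s : Fin m → F2) (v : QV n) : Prop :=
  SupportedOn r v ∧ synd H v = s

lemma synd_add {n m : ℕ} (H : Matrix (Fin m) (Fin n ⊕ Fin n) F2) (u v : QV n) :
    synd H (u + v) = synd H u + synd H v := by
  funext i
  simp [synd, sympl, add_dotProduct]

lemma synd_sub {n m : ℕ} (H : Matrix (Fin m) (Fin n ⊕ Fin n) F2) (u v : QV n) :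
    synd H (u - v) = synd H u - synd H v := by
  funext i
  simp [synd, sympl, sub_dotProduct]

lemma supportedOn_add {n : ℕ} {r : Finset (Fin n)} {u v : QV n}
    (hu : SupportedOn r u) (hv : SupportedOn r v) : SupportedOn r (u + v) := by
  intro j hj
  obtain ⟨h1, h2⟩ := hu j hj
  obtain ⟨h3, h4⟩ := hv j hj
  constructor <;> simp [h1, h2, h3, h4]

lemma supportedOn_sub {n : ℕ} {r : Finset (Fin n)} {u v : QV n}
    (hu : SupportedOn r u) (hv : SupportedOn r v) : SupportedOn r (u - v) := by
  intro j hj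
  obtain ⟨h1, h2⟩ := hu j hj
  obtain ⟨h3, h4⟩ := hv j hj
  constructor <;> simp [h1, h2, h3, h4]

/-- If `E` and `F` are both feasible solutions for `(r, s)`, then the
sets of feasible solutions in the logical cosets `E + C` and `F + C` have equal
cardinality. -/
theorem statement0 (n m : ℕ) (hn : 0 < n) (hm : 0 < m)
    (H : Matrix (Fin m) (Fin n ⊕ Fin n) F2)
    (r : Finset (Fin n)) (s : Fin m → F2) (E F : QV n)
    (hE : Feasible H r s E) (hF : Feasible H r s F) :
    Set.ncard {v : QV n | v - E ∈ rowSpace H ∧ Feasible H r s v}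
      = Set.ncard {v : QV n | v - F ∈ rowSpace H ∧ Feasible H r s v} := by
  have step : ∀ (A B : QV n), Feasible H r s A → Feasible H r s B →
      ∀ v : QV n, v - A ∈ rowSpace H ∧ Feasible H r s v →
      (v - A + B) - B ∈ rowSpace H ∧ Feasible H r s (v - A + B) := by
    intro A B hA hB v hv
    refine ⟨by simpa using hv.1, ?_, ?_⟩
    · exact supportedOn_add (supportedOn_sub hv.2.1 hA.1) hB.1
    · rw [synd_add, synd_sub, hv.2.2, hA.2, hB.2]; ring_nf
  have himg : {v : QV n | v - F ∈ rowSpace H ∧ Feasible H r s v}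
      = (fun v => v - E + F) '' {v : QV n | v - E ∈ rowSpace H ∧ Feasible H r s v} := by
    ext w
    constructor
    · intro hw
      refine ⟨w - F + E, step F E hF hE w hw, ?_⟩
      show (w - F + E) - E + F = w
      ring
    · rintro ⟨v, hv, rfl⟩
      exact step E F hE hF v hv
  rw [himg]
  exact (Set.ncard_image_of_injective _ (fun x y h => by
    have : x - E + F = y - E + F := h
    have h2 := congrArg (fun z : QV n => z - F + E) this
    simpa using h2)).symm
end

section
/- Let H ∈ F2^{m×2n}, C = Row(H), r ⊆ {1,…,n} an erasure set and s ∈ F2^m a syndrome. If E is a feasible solution for (r,s), then for every vector F ∈ F2^{2n}, the number of feasible solutions for (r,s) contained in the logical coset F + C is at most the number of feasible solutions contained in E + C. (Since the conditional probability of a logical coset given the erasure set and syndrome is proportional to the number of feasible solutions it contains, any feasible solution lies in a maximum-likelihood logical coset; hence a decoder that always outputs a feasible solution is a maximum-likelihood decoder.) -/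
open Matrix

/-- If `E` is a feasible solution for `(r, s)`, then every logical coset
`F + C` contains at most as many feasible solutions as `E + C`; i.e. any feasible
solution lies in a maximum-likelihood logical coset. -/
theorem statement1 (n m : ℕ) (hn : 0 < n) (hm : 0 < m)
    (H : Matrix (Fin m) (Fin n ⊕ Fin n) F2)
    (r : Finset (Fin n)) (s : Fin m → F2) (E : QV n)
    (hE : Feasible H r s E) :
    ∀ F : QV n,
      Set.ncard {v : QV n | v - F ∈ rowSpace H ∧ Feasible H r s v}
        ≤ Set.ncard {v : QV n | v - E ∈ rowSpace H ∧ Feasible H r s v} := by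
  intro F
  rcases Set.eq_empty_or_nonempty
      {v : QV n | v - F ∈ rowSpace H ∧ Feasible H r s v} with h | h
  · simp [h]
  obtain ⟨v0, hv0C, hv0S, hv0synd⟩ := h
  apply Set.ncard_le_ncard_of_injOn (fun v => v - v0 + E)
  · rintro v ⟨hvC, hvS, hvsynd⟩
    refine ⟨?_, ?_, ?_⟩
    · have : v - v0 + E - E = (v - F) - (v0 - F) := by ring
      rw [this]
      exact sub_mem hvC hv0C
    · intro j hj
      have h1 := hvS j hj
      have h2 := hv0S j hj
      have h3 := hE.1 j hj
      constructor <;> simp [h1.1, h1.2, h2.1, h2.2, h3.1, h3.2]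
    · funext i
      have h1 : synd H v i = s i := by rw [hvsynd]
      have h2 : synd H v0 i = s i := by rw [hv0synd]
      have h3 : synd H E i = s i := by rw [hE.2]
      simp only [synd, sympl] at h1 h2 h3 ⊢
      simp [add_dotProduct, sub_dotProduct, h1, h2, h3]
  · intro a _ b _ hab
    simpa using hab
end

section
/- Let H ∈ F2^{m×2n} satisfy H Λ Hᵀ = 0, let C = Row(H), and C⊥ = {v ∈ F2^{2n} : ⟨v,H⟩ = 0} (so C ⊆ C⊥). Let r ⊆ {1,…,n} be an erasure set and suppose every v ∈ C⊥ \ C satisfies gw(v) > |r| (i.e., the number of erasures is at most d − 1, where d is the minimum distance of the stabilizer code, the minimum generalized weight over C⊥ \ C). Then for any E, F ∈ F2^{2n} that are both supported on r2 and satisfy ⟨E,H⟩ = ⟨F,H⟩, one has F ∈ E + C. In particular, every feasible solution lies in the logical coset of the actual error, so maximum-likelihood decoding always succeeds up to degeneracy. -/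
open Matrix

/-- The generalized weight of `v ∈ F₂^{2n}`: the number of `j ∈ {1,…,n}` with
`(v_j, v_{j+n}) ≠ (0,0)`. -/
def gw {n : ℕ} (v : QV n) : ℕ :=
  (Finset.univ.filter fun j : Fin n => ¬(v (Sum.inl j) = 0 ∧ v (Sum.inr j) = 0)).card

/-- If `H Λ Hᵀ = 0` and every vector of `C⊥ \ C` has generalized weight
exceeding `|r|` (fewer than `d` erasures), then any two errors supported on `r2` with
equal syndromes lie in the same logical coset: MLD always succeeds up to degeneracy. -/
theorem statement6 (n m : ℕ) (hn : 0 < n) (hm : 0 < m)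
    (H : Matrix (Fin m) (Fin n ⊕ Fin n) F2)
    (hH : H * Lam n * H.transpose = 0)
    (r : Finset (Fin n))
    (hd : ∀ v : QV n, synd H v = 0 → v ∉ rowSpace H → r.card < gw v)
    (E F : QV n) (hE : SupportedOn r E) (hF : SupportedOn r F)
    (hs : synd H E = synd H F) :
    F - E ∈ rowSpace H := by
  by_contra h
  have hsynd : synd H (F - E) = 0 := by
    funext i
    have : synd H F i - synd H E i = 0 := by rw [hs]; ring
    simpa [synd, sympl, sub_dotProduct, Pi.sub_apply] using this
  have hlt := hd (F - E) hsynd h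
  have hle : gw (F - E) ≤ r.card := by
    apply Finset.card_le_card
    intro j hj
    simp only [Finset.mem_filter, Finset.mem_univ, true_and] at hj
    by_contra hjr
    exact hj ⟨by simp [(hE j hjr).1, (hF j hjr).1],
      by simp [(hE j hjr).2, (hF j hjr).2]⟩
  omega
end

section
/- (Hoeffding bound for the binomial tail, as used for the bounded-distance-decoding error probability.) Let n ≥ 1 be an integer, p ∈ [0,1] a real number, and t an integer with 0 ≤ t ≤ n and n·p ≤ t. Then the tail probability P_BDD(n,t,p) = Σ_{j = t+1}^{n} C(n,j) p^j (1−p)^{n−j} satisfies P_BDD(n,t,p) ≤ exp(−2n(t/n − p)²). -/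
/-!
Chernoff's exponential-moment argument: for every `l ≥ 0`, weighting the `j`-th term of the tail
by `exp (l (j - t)) ≥ 1` and completing to the full binomial expansion bounds the tail by
`exp (-l t) (p eˡ + 1 - p)ⁿ`. Hoeffding's lemma for a Bernoulli variable gives
`p eˡ + 1 - p ≤ exp (l p + l² / 8)`, and `l = 4 (t / n - p)` makes the exponent `-2 n (t / n - p)²`.
-/

open Real Finset MeasureTheory ProbabilityTheory

theorem bernoulli_mgf_le (p : ℝ) (hp0 : 0 ≤ p) (hp1 : p ≤ 1) (x : ℝ) :
    p * exp x + (1 - p) ≤ exp (x * p + x ^ 2 / 8) := by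
  let μ : Measure ℝ := Ber((1 : ℝ), 0, ⟨p, hp0, hp1⟩)
  have hmean : μ[id] = p := by simp [μ, integral_bernoulliMeasure]
  have hsupp : ∀ᵐ ω ∂μ, id ω ∈ Set.Icc (0 : ℝ) 1 :=
    ae_add_measure_iff.2 ⟨Measure.ae_smul_measure (by simp) _,
      Measure.ae_smul_measure (by simp) _⟩
  have hoeffding := (hasSubgaussianMGF_of_mem_Icc aemeasurable_id hsupp).mgf_le x
  simp only [mgf, hmean, μ, integral_bernoulliMeasure] at hoeffding
  norm_num at hoeffding
  calc p * exp x + (1 - p)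
      = exp (x * p) * (p * exp (x * (1 - p)) + (1 - p) * exp (-(x * p))) := by
        have h1 : exp (x * p) * exp (x * (1 - p)) = exp x := by rw [← exp_add]; ring_nf
        have h2 : exp (x * p) * exp (-(x * p)) = 1 := by rw [← exp_add]; simp
        linear_combination (-p) * h1 - (1 - p) * h2
    _ ≤ exp (x * p) * exp (1 / 4 * x ^ 2 / 2) := by gcongr
    _ = exp (x * p + x ^ 2 / 8) := by rw [← exp_add]; ring_nf

noncomputable def binomialTail (n t : ℕ) (p : ℝ) : ℝ :=
  ∑ j ∈ Icc (t + 1) n, (n.choose j : ℝ) * p ^ j * (1 - p) ^ (n - j)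

theorem binomialTail_le_exp_mul_pow (n t : ℕ) {p : ℝ} (hp0 : 0 ≤ p) (hp1 : p ≤ 1) {l : ℝ}
    (hl : 0 ≤ l) : binomialTail n t p ≤ exp (-(l * t)) * (p * exp l + (1 - p)) ^ n := by
  have hq0 : 0 ≤ 1 - p := sub_nonneg.2 hp1
  calc binomialTail n t p
      ≤ ∑ j ∈ Icc (t + 1) n,
          exp (l * (j - t)) * ((n.choose j : ℝ) * p ^ j * (1 - p) ^ (n - j)) := by
        refine sum_le_sum fun j hj ↦ le_mul_of_one_le_left (by positivity) (one_le_exp ?_)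
        have : (t : ℝ) + 1 ≤ j := by exact_mod_cast (mem_Icc.1 hj).1
        nlinarith
    _ ≤ ∑ j ∈ range (n + 1),
          exp (l * (j - t)) * ((n.choose j : ℝ) * p ^ j * (1 - p) ^ (n - j)) :=
        sum_le_sum_of_subset_of_nonneg
          (fun j hj ↦ mem_range.2 (Nat.lt_succ_of_le (mem_Icc.1 hj).2)) fun j _ _ ↦ by positivity
    _ = exp (-(l * t)) * (p * exp l + (1 - p)) ^ n := by
        rw [add_pow, mul_sum]
        refine sum_congr rfl fun j _ ↦ ?_
        rw [mul_pow, ← exp_nat_mul, show l * ((j : ℝ) - t) = -(l * t) + j * l by ring, exp_add]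
        ring

theorem binomialTail_le_exp (n t : ℕ) {p : ℝ} (hp0 : 0 ≤ p) (hp1 : p ≤ 1) {l : ℝ}
    (hl : 0 ≤ l) : binomialTail n t p ≤ exp (n * (l * p + l ^ 2 / 8) - l * t) :=
  calc binomialTail n t p ≤ exp (-(l * t)) * (p * exp l + (1 - p)) ^ n :=
        binomialTail_le_exp_mul_pow n t hp0 hp1 hl
    _ ≤ exp (-(l * t)) * exp (l * p + l ^ 2 / 8) ^ n := by
        have : 0 ≤ 1 - p := sub_nonneg.2 hp1
        gcongr
        exact bernoulli_mgf_le p hp0 hp1 l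
    _ = exp (n * (l * p + l ^ 2 / 8) - l * t) := by
        rw [← exp_nat_mul, ← exp_add]; ring_nf

theorem statement11_general (n t : ℕ) (hn : 1 ≤ n)
    (p : ℝ) (hp0 : 0 ≤ p) (hp1 : p ≤ 1) (hnp : (n : ℝ) * p ≤ t) :
    ∑ j ∈ Finset.Icc (t + 1) n, (n.choose j : ℝ) * p ^ j * (1 - p) ^ (n - j)
      ≤ Real.exp (-2 * n * ((t : ℝ) / n - p) ^ 2) := by
  have hn0 : (0 : ℝ) < n := by exact_mod_cast hn
  set a : ℝ := (t : ℝ) / n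
  have hta : (t : ℝ) = n * a := (mul_div_cancel₀ _ hn0.ne').symm
  have hpa : p ≤ a := by rw [le_div_iff₀ hn0]; linarith
  -- `4 (a - p)` minimises `l ↦ n (l p + l² / 8) - l t`
  have hl : 0 ≤ 4 * (a - p) := by linarith
  calc binomialTail n t p
      ≤ exp (n * (4 * (a - p) * p + (4 * (a - p)) ^ 2 / 8) - 4 * (a - p) * t) :=
        binomialTail_le_exp n t hp0 hp1 hl
    _ = exp (-2 * n * (a - p) ^ 2) := by rw [hta]; ring_nf

/-- **Hoeffding bound for the binomial tail.** For `1 ≤ n`, `p ∈ [0,1]`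
and an integer `t` with `0 ≤ t ≤ n` and `n·p ≤ t`, the binomial tail probability
`P_BDD(n,t,p) = Σ_{j=t+1}^n C(n,j) pʲ (1−p)^{n−j}` is at most `exp(−2n(t/n − p)²)`. -/
theorem statement11 (n t : ℕ) (hn : 1 ≤ n) (ht : t ≤ n)
    (p : ℝ) (hp0 : 0 ≤ p) (hp1 : p ≤ 1) (hnp : (n : ℝ) * p ≤ t) :
    ∑ j ∈ Finset.Icc (t + 1) n, (n.choose j : ℝ) * p ^ j * (1 - p) ^ (n - j)
      ≤ Real.exp (-2 * n * ((t : ℝ) / n - p) ^ 2) :=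
  statement11_general n t hn p hp0 hp1 hnp
end

section
/- (Soundness of the efficient check-node computation in MBP.) Let w ≥ 2 be an integer and Γ_1, …, Γ_w nonzero real numbers, and set Δ = 2·artanh(∏_{j=1}^{w} tanh(Γ_j/2)). Then 0 < |Δ| < min_{1 ≤ j ≤ w} |Γ_j|. In particular, the quantity Δ ⊟ Γ_j := 2·artanh( tanh(Δ/2) / tanh(Γ_j/2) ) is well defined (the argument of artanh lies strictly between −1 and 1) and satisfies Δ ⊟ Γ_j = 2·artanh(∏_{j'≠j} tanh(Γ_{j'}/2)). -/
noncomputable def artanh (x : ℝ) : ℝ := (1 / 2) * Real.log ((1 + x) / (1 - x))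

lemma tanh_eq' (x : ℝ) : Real.tanh x = (Real.exp (2*x) - 1) / (Real.exp (2*x) + 1) := by
  rw [Real.tanh_eq_sinh_div_cosh, Real.sinh_eq, Real.cosh_eq, Real.exp_neg, two_mul,
    Real.exp_add]
  have h := Real.exp_pos x
  field_simp

lemma exp_denom_pos (x : ℝ) : 0 < Real.exp (2*x) + 1 := by positivity

lemma abs_tanh_lt_one (x : ℝ) : |Real.tanh x| < 1 := by
  rw [tanh_eq', abs_div, abs_of_pos (exp_denom_pos x), div_lt_one (exp_denom_pos x), abs_lt]
  constructor <;> nlinarith [Real.exp_pos (2*x)]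

lemma tanh_ne_zero {x : ℝ} (hx : x ≠ 0) : Real.tanh x ≠ 0 := by
  rw [tanh_eq', div_ne_zero_iff]
  refine ⟨fun h => hx ?_, (exp_denom_pos x).ne'⟩
  have : Real.exp (2*x) = Real.exp 0 := by rw [Real.exp_zero]; linarith
  have := Real.exp_injective this
  linarith

lemma tanh_strictMono : StrictMono Real.tanh := by
  intro x y hxy
  rw [tanh_eq', tanh_eq']
  have hx := Real.exp_pos (2*x)
  have hy := Real.exp_pos (2*y)
  have : Real.exp (2*x) < Real.exp (2*y) := Real.exp_lt_exp.2 (by linarith)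
  rw [div_lt_div_iff₀ (by linarith) (by linarith)]
  nlinarith

lemma tanh_abs (x : ℝ) : Real.tanh |x| = |Real.tanh x| := by
  rcases le_or_gt 0 x with h | h
  · rw [abs_of_nonneg h, abs_of_nonneg]
    have := tanh_strictMono.monotone h
    simpa [Real.tanh_eq_sinh_div_cosh] using this
  · have hneg : Real.tanh x < 0 := by
      have := tanh_strictMono h
      simpa [Real.tanh_eq_sinh_div_cosh] using this
    rw [abs_of_neg h, abs_of_neg hneg, Real.tanh_eq_sinh_div_cosh,
      Real.tanh_eq_sinh_div_cosh, Real.sinh_neg, Real.cosh_neg, neg_div]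

lemma tanh_artanh {x : ℝ} (hx : |x| < 1) : Real.tanh (artanh x) = x := by
  have h1 : 0 < 1 - x := by cases abs_lt.1 hx; linarith
  have h2 : 0 < 1 + x := by cases abs_lt.1 hx; linarith
  have hexp : Real.exp (2 * artanh x) = (1 + x) / (1 - x) := by
    rw [artanh]
    rw [show 2 * ((1:ℝ)/2 * Real.log ((1+x)/(1-x))) = Real.log ((1+x)/(1-x)) by ring]
    exact Real.exp_log (by positivity)
  rw [tanh_eq', hexp]
  field_simp
  ring

lemma prod_lt_one_of_lt {ι : Type*} [DecidableEq ι] (s : Finset ι) (hs : s.Nonempty) (f : ι → ℝ)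
    (h0 : ∀ i ∈ s, 0 ≤ f i) (h1 : ∀ i ∈ s, f i < 1) : ∏ i ∈ s, f i < 1 := by
  obtain ⟨k, hk⟩ := hs
  calc ∏ i ∈ s, f i = f k * ∏ i ∈ s.erase k, f i := (Finset.mul_prod_erase s f hk).symm
    _ ≤ f k * 1 := by
        refine mul_le_mul_of_nonneg_left ?_ (h0 k hk)
        exact Finset.prod_le_one (fun i hi => h0 i (Finset.mem_of_mem_erase hi))
          (fun i hi => (h1 i (Finset.mem_of_mem_erase hi)).le)
    _ < 1 := by rw [mul_one]; exact h1 k hk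

/-- **soundness of the efficient check-node computation in MBP.**
For `w ≥ 2` nonzero reals `Γ_j` and `Δ = 2·artanh(∏ⱼ tanh(Γⱼ/2))`, we have
`0 < |Δ| < minⱼ |Γⱼ|`; in particular `Δ ⊟ Γⱼ = 2·artanh(tanh(Δ/2)/tanh(Γⱼ/2))` is well
defined (the argument of `artanh` lies strictly in `(−1,1)`) and equals
`2·artanh(∏_{j'≠j} tanh(Γ_{j'}/2))`. -/
theorem statement13 (w : ℕ) (hw : 2 ≤ w) (Γ : Fin w → ℝ) (hΓ : ∀ j, Γ j ≠ 0)
    (Δ : ℝ) (hΔ : Δ = 2 * artanh (∏ j, Real.tanh (Γ j / 2))) :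
    0 < |Δ| ∧ (∀ j, |Δ| < |Γ j|) ∧
    ∀ j : Fin w,
      |Real.tanh (Δ / 2) / Real.tanh (Γ j / 2)| < 1 ∧
      2 * artanh (Real.tanh (Δ / 2) / Real.tanh (Γ j / 2))
        = 2 * artanh (∏ j' ∈ Finset.univ.erase j, Real.tanh (Γ j' / 2)) := by
  set t : Fin w → ℝ := fun j => Real.tanh (Γ j / 2) with ht
  have htne : ∀ j, t j ≠ 0 := fun j => tanh_ne_zero (div_ne_zero (hΓ j) two_ne_zero)
  have htlt : ∀ j, |t j| < 1 := fun j => abs_tanh_lt_one _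
  set P : ℝ := ∏ j, t j with hP
  have hne : (Finset.univ : Finset (Fin w)).Nonempty := by
    refine Finset.univ_nonempty_iff.2 ?_
    exact Fin.pos_iff_nonempty.1 (by omega)
  have habsP : |P| < 1 := by
    rw [hP, Finset.abs_prod]
    exact prod_lt_one_of_lt _ hne _ (fun i _ => abs_nonneg _) (fun i _ => htlt i)
  have hPne : P ≠ 0 := Finset.prod_ne_zero_iff.2 (fun j _ => htne j)
  have hΔ2 : Real.tanh (Δ / 2) = P := by
    rw [hΔ]
    rw [show 2 * artanh P / 2 = artanh P by ring]
    exact tanh_artanh habsP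
  have hΔne : Δ ≠ 0 := by
    intro h
    apply hPne
    rw [← hΔ2, h]
    simp [Real.tanh_eq_sinh_div_cosh]
  -- key factorization
  have hfac : ∀ j : Fin w, P = t j * ∏ j' ∈ Finset.univ.erase j, t j' := by
    intro j
    rw [hP, ← Finset.mul_prod_erase Finset.univ t (Finset.mem_univ j)]
  have herase_ne : ∀ j : Fin w, (Finset.univ.erase j).Nonempty := by
    intro j
    have : 1 ≤ (Finset.univ.erase j).card := by
      rw [Finset.card_erase_of_mem (Finset.mem_univ j), Finset.card_univ, Fintype.card_fin]
      omega
    exact Finset.card_pos.1 (by omega)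
  have hQlt : ∀ j : Fin w, |∏ j' ∈ Finset.univ.erase j, t j'| < 1 := by
    intro j
    rw [Finset.abs_prod]
    exact prod_lt_one_of_lt _ (herase_ne j) _ (fun i _ => abs_nonneg _) (fun i _ => htlt i)
  have habslt : ∀ j : Fin w, |P| < |t j| := by
    intro j
    rw [hfac j, abs_mul]
    have h0 : 0 < |t j| := abs_pos.2 (htne j)
    nlinarith [hQlt j, abs_nonneg (∏ j' ∈ Finset.univ.erase j, t j'), h0]
  refine ⟨abs_pos.2 hΔne, fun j => ?_, fun j => ?_⟩
  · -- |Δ| < |Γ j|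
    have h1 : Real.tanh (|Δ| / 2) < Real.tanh (|Γ j| / 2) := by
      rw [show |Δ| / 2 = |Δ / 2| by rw [abs_div]; norm_num,
        show |Γ j| / 2 = |Γ j / 2| by rw [abs_div]; norm_num, tanh_abs, tanh_abs, hΔ2]
      exact habslt j
    have := tanh_strictMono.lt_iff_lt.1 h1
    linarith
  · have hdiv : Real.tanh (Δ / 2) / Real.tanh (Γ j / 2)
        = ∏ j' ∈ Finset.univ.erase j, t j' := by
      rw [hΔ2, hfac j]
      have : Real.tanh (Γ j / 2) = t j := rfl
      rw [this, mul_comm, mul_div_assoc, div_self (htne j), mul_one]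
    rw [hdiv]
    exact ⟨hQlt j, rfl⟩
end
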